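/- Let G be a finite connected simple graph with vertex set V and graph distance dist, let J ⊆ V, and let f : J → ℤ. If for all x, y ∈ J one has |f(x) − f(y)| ≤ dist(x, y), then there exists a gradually varied function F : V → ℤ (i.e. |F(a) − F(b)| ≤ 1 whenever a and b are adjacent in G) with F(x) = f(x) for every x ∈ J. (Sufficiency direction of Chen's gradually varied extension theorem, Theorem 2.2, with the levels A_1, …, A_n encoded by their integer indices.) -/
import Mathlib

open Classical in
/-- Sufficiency direction of Chen's gradually varied extension theorem (Theorem 2.2):
on a finite connected simple graph, if `f : J → ℤ` satisfies
`|f x - f y| ≤ dist x y` on the guiding set `J`, then `f` extends to a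
gradually varied function `F` on all vertices, i.e. `|F a - F b| ≤ 1`
whenever `a` and `b` are adjacent. -/
theorem gradually_varied_extension_exists {V : Type*} [Fintype V]
    (G : SimpleGraph V) (hG : G.Connected)
    (J : Set V) (f : V → ℤ)
    (hf : ∀ x ∈ J, ∀ y ∈ J, |f x - f y| ≤ (G.dist x y : ℤ)) :
    ∃ F : V → ℤ, (∀ a b : V, G.Adj a b → |F a - F b| ≤ 1) ∧ ∀ x ∈ J, F x = f x := by
  classical
  by_cases hJ : J = ∅
  · exact ⟨0, fun a b _ => by simp, fun x hx => by simp [hJ] at hx⟩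
  have hs : J.toFinset.Nonempty := by
    rw [Set.toFinset_nonempty]
    exact Set.nonempty_iff_ne_empty.2 hJ
  set F : V → ℤ := fun v => J.toFinset.inf' hs (fun x => f x + (G.dist x v : ℤ)) with hF
  have hdistAdj : ∀ a b : V, G.Adj a b → (G.dist a b : ℤ) ≤ 1 := by
    intro a b hab
    have := G.dist_le (SimpleGraph.Walk.cons hab SimpleGraph.Walk.nil)
    simp at this
    exact_mod_cast this
  have key : ∀ a b : V, G.Adj a b → F a ≤ F b + 1 := by
    intro a b hab
    rw [hF]
    rw [Finset.inf'_le_iff]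
    obtain ⟨y, hy, hymin⟩ := Finset.exists_mem_eq_inf' hs (fun x => f x + (G.dist x b : ℤ))
    refine ⟨y, hy, ?_⟩
    have h1 : G.dist y a ≤ G.dist y b + G.dist b a := hG.dist_triangle
    have h2 : (G.dist b a : ℤ) ≤ 1 := hdistAdj b a hab.symm
    have : (G.dist y a : ℤ) ≤ (G.dist y b : ℤ) + 1 := by
      calc (G.dist y a : ℤ) ≤ ((G.dist y b + G.dist b a : ℕ) : ℤ) := by exact_mod_cast h1
        _ ≤ (G.dist y b : ℤ) + 1 := by push_cast; linarith
    have : f y + (G.dist y a : ℤ) ≤ (f y + (G.dist y b : ℤ)) + 1 := by linarith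
    rw [← hymin] at this
    linarith
  refine ⟨F, fun a b hab => ?_, fun x hx => ?_⟩
  · have h1 := key a b hab
    have h2 := key b a hab.symm
    rw [abs_le]; constructor <;> linarith
  · have hx' : x ∈ J.toFinset := Set.mem_toFinset.2 hx
    have hle : F x ≤ f x := by
      have h := Finset.inf'_le (fun y => f y + (G.dist y x : ℤ)) hx'
      simp only [SimpleGraph.dist_self, Nat.cast_zero, add_zero] at h
      exact h
    have hge : f x ≤ F x := by
      rw [hF]
      apply Finset.le_inf'
      intro y hy
      have := hf x hx y (Set.mem_toFinset.1 hy)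
      rw [abs_le] at this
      have hd : G.dist x y = G.dist y x := SimpleGraph.dist_comm
      rw [hd] at this
      linarith [this.1]
    linarith
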